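/- Let S_λ be a densely defined weighted shift on a leafless directed tree T with nonzero weights λ = {λ_v}_{v∈V°} ⊆ ℂ. Then S_λ is hyponormal if and only if Σ_{v∈Chi(u)} |λ_v|² / ‖S_λ e_v‖² ≤ 1 for every u ∈ V. -/

import Mathlib

open scoped ENNReal NNReal Classical

noncomputable section

/-- A directed tree: a directed graph with nonempty vertex set in which each vertex has
at most one parent, there are no circuits, and the underlying undirected graph is
connected and has no cycles (i.e. is a tree). -/
structure DirectedTree (V : Type) where
  edge : V → V → Prop
  nonempty : Nonempty V
  antisymm : ∀ u v : V, edge u v → ¬ edge v u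
  parent_unique : ∀ u v w : V, edge u w → edge v w → u = v
  isTree : (SimpleGraph.fromRel edge).IsTree

namespace DirectedTree

variable {V : Type} (T : DirectedTree V)

/-- The set of children of a vertex. -/
def chi (u : V) : Set V := {v | T.edge u v}

/-- `v` has a parent. -/
def HasParent (v : V) : Prop := ∃ u, T.edge u v

/-- `V⁰`: the set of non-root vertices, i.e. the vertices possessing a parent. -/
def Vcirc : Set V := {v | T.HasParent v}

/-- The tree is leafless if every vertex has a child. -/
def Leafless : Prop := ∀ u : V, (T.chi u).Nonempty

/-- The parent of a vertex (junk value if the vertex is a root). -/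
def par (v : V) : V := if h : T.HasParent v then h.choose else T.nonempty.some

/-- The set of descendants of a vertex. -/
def desc (u : V) : Set V := {w | Relation.ReflTransGen T.edge u w}

/-- The formal weighted shift map `Λ_T` acting on all complex functions on `V`. -/
def Lam (lam : V → ℂ) (f : V → ℂ) : V → ℂ :=
  fun v => if T.HasParent v then lam v * f (T.par v) else 0

/-- The domain of the weighted shift `S_λ`. -/
def domain (lam : V → ℂ) : Set (lp (fun _ : V => ℂ) 2) :=
  {f | Memℓp (T.Lam lam ⇑f) 2}

/-- The weighted shift `S_λ` (extended by `0` outside its domain). -/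
def shift (lam : V → ℂ) (f : lp (fun _ : V => ℂ) 2) : lp (fun _ : V => ℂ) 2 :=
  if h : f ∈ T.domain lam then (⟨T.Lam lam ⇑f, h⟩ : lp (fun _ : V => ℂ) 2) else 0

/-- The domain of `S_λ²`. -/
def squareDomain (lam : V → ℂ) : Set (lp (fun _ : V => ℂ) 2) :=
  {f | f ∈ T.domain lam ∧ T.shift lam f ∈ T.domain lam}

/-- The domain of the adjoint `S_λ*`. -/
def adjDomain (lam : V → ℂ) : Set (lp (fun _ : V => ℂ) 2) :=
  {g | ∃ h : lp (fun _ : V => ℂ) 2,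
    ∀ f ∈ T.domain lam, (inner ℂ (T.shift lam f) g : ℂ) = inner ℂ f h}

/-- `S_λ` is hyponormal: it is densely defined, `D(S_λ) ⊆ D(S_λ*)` and
`‖S_λ* f‖ ≤ ‖S_λ f‖` for every `f ∈ D(S_λ)` (the adjoint value at `f` being any vector
`h` satisfying `⟪S_λ g, f⟫ = ⟪g, h⟫` for all `g ∈ D(S_λ)`; it is unique by density). -/
def IsHyponormal (lam : V → ℂ) : Prop :=
  Dense (T.domain lam) ∧ T.domain lam ⊆ T.adjDomain lam ∧
    ∀ f ∈ T.domain lam, ∀ h : lp (fun _ : V => ℂ) 2,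
      (∀ g ∈ T.domain lam, (inner ℂ (T.shift lam g) f : ℂ) = inner ℂ g h) →
        ‖h‖ ≤ ‖T.shift lam f‖

/-- `ζ_u = (Σ_{v ∈ Chi(u)} |λ_v|²)^{1/2} ∈ [0,∞]`. -/
def zeta (lam : V → ℂ) (u : V) : ℝ≥0∞ :=
  (∑' v : T.chi u, ((‖lam (v : V)‖₊ : ℝ≥0∞)) ^ 2) ^ (1/2 : ℝ)

end DirectedTree

/-!
Write `ζ_v² = ∑_{w ∈ Chi(v)} |λ_w|²`. Then `‖S_λ f‖² = ∑_v ζ_v² |f(v)|²`, so `‖S_λ e_v‖ = ζ_v`,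
and density of `D(S_λ)` forces every `ζ_v` to be finite. The adjoint is given by
`(S_λ* f)(u) = ∑_{v ∈ Chi(u)} conj(λ_v) f(v)`.

If the condition holds, Cauchy–Schwarz applied to `conj(λ_v) f(v) = (conj(λ_v) / ζ_v) (ζ_v f(v))`
gives `|(S_λ* f)(u)|² ≤ ∑_{v ∈ Chi(u)} ζ_v² |f(v)|²`, and summing over `u` gives
`‖S_λ* f‖ ≤ ‖S_λ f‖`. Conversely, for a finite `F ⊆ Chi(u)` the vector
`f = ∑_{v ∈ F} (λ_v / ζ_v²) e_v` has `S_λ* f = s e_u` and `‖S_λ f‖² = s`, where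
`s = ∑_{v ∈ F} |λ_v|² / ζ_v²`; hyponormality gives `s² ≤ s`, i.e. `s ≤ 1`.
-/

open scoped ComplexConjugate

theorem memℓp_two_iff_tsum_enorm_sq_ne_top {ι : Type*} {E : ι → Type*}
    [∀ i, NormedAddCommGroup (E i)] {f : ∀ i, E i} : Memℓp f 2 ↔ ∑' i, ‖f i‖ₑ ^ 2 ≠ ∞ := by
  rw [memℓp_gen_iff (by norm_num), ENNReal.toReal_ofNat]
  simp only [Real.rpow_two, ← coe_nnnorm, ← NNReal.coe_pow, NNReal.summable_coe, enorm_eq_nnnorm,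
    ← ENNReal.coe_pow, ENNReal.tsum_coe_ne_top_iff_summable]

theorem lp.enorm_sq_eq_tsum {ι : Type*} {E : ι → Type*} [∀ i, NormedAddCommGroup (E i)]
    (f : lp E 2) : ‖f‖ₑ ^ 2 = ∑' i, ‖f i‖ₑ ^ 2 := by
  have hs := memℓp_two_iff_tsum_enorm_sq_ne_top.1 f.2
  have h := lp.norm_rpow_eq_tsum (p := 2) (by norm_num) f
  simp only [ENNReal.toReal_ofNat, Real.rpow_two, ← coe_nnnorm, ← NNReal.coe_pow,
    ← NNReal.coe_tsum, NNReal.coe_inj] at h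
  simp only [enorm_eq_nnnorm, ← ENNReal.coe_pow] at hs ⊢
  rw [h, ENNReal.coe_tsum (ENNReal.tsum_coe_ne_top_iff_summable.1 hs)]

theorem lp.tsum_mul_enorm_sum_single_sq {ι E : Type*} [NormedAddCommGroup E] (r : ι → ℝ≥0∞)
    (F : Finset ι) (c : ι → E) :
    ∑' i, r i * ‖(∑ j ∈ F, lp.single 2 j (c j) : lp (fun _ : ι => E) 2) i‖ₑ ^ 2 =
      ∑ i ∈ F, r i * ‖c i‖ₑ ^ 2 := by
  simp only [lp.coeFn_sum, lp.coeFn_single, Finset.sum_apply, Finset.sum_pi_single]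
  rw [tsum_eq_sum (s := F) fun i hi => by simp [hi]]
  exact Finset.sum_congr rfl fun i hi => by simp [hi]

theorem ENNReal.sq_tsum_mul_le {ι : Type*} (a b : ι → ℝ≥0∞) :
    (∑' i, a i * b i) ^ 2 ≤ (∑' i, a i ^ 2) * ∑' i, b i ^ 2 := by
  let _ : MeasurableSpace ι := ⊤
  have _ : MeasurableSingletonClass ι := ⟨fun _ => trivial⟩
  have h := ENNReal.lintegral_mul_le_Lp_mul_Lq MeasureTheory.Measure.count
    Real.HolderConjugate.two_two (measurable_from_top (f := a)).aemeasurable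
    (measurable_from_top (f := b)).aemeasurable
  simp only [Pi.mul_apply, MeasureTheory.lintegral_count, ENNReal.rpow_two] at h
  calc (∑' i, a i * b i) ^ 2
      ≤ ((∑' i, a i ^ 2) ^ (1 / 2 : ℝ) * (∑' i, b i ^ 2) ^ (1 / 2 : ℝ)) ^ 2 := by gcongr
    _ = (∑' i, a i ^ 2) * ∑' i, b i ^ 2 := by
      rw [mul_pow, ← ENNReal.rpow_natCast, ← ENNReal.rpow_natCast _ 2, ← ENNReal.rpow_mul,
        ← ENNReal.rpow_mul]
      norm_num

theorem ENNReal.sq_tsum_mul_le_of_weight {ι : Type*} (a b w : ι → ℝ≥0∞) (hw₀ : ∀ i, w i ≠ 0)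
    (hw : ∀ i, w i ≠ ∞) :
    (∑' i, a i * b i) ^ 2 ≤ (∑' i, a i ^ 2 / w i ^ 2) * ∑' i, w i ^ 2 * b i ^ 2 := by
  have hab : ∀ i, a i * b i = a i / w i * (w i * b i) := fun i => by
    rw [← mul_assoc, ENNReal.div_mul_cancel (hw₀ i) (hw i)]
  simpa only [hab, div_eq_mul_inv, mul_pow, ENNReal.inv_pow] using
    ENNReal.sq_tsum_mul_le (fun i => a i / w i) (fun i => w i * b i)

theorem ENNReal.le_one_of_sq_le_self {a : ℝ≥0∞} (ha : a ≠ ∞) (h : a ^ 2 ≤ a) : a ≤ 1 := by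
  rcases eq_or_ne a 0 with rfl | ha₀
  · exact zero_le_one
  · exact (ENNReal.mul_le_mul_iff_right ha₀ ha).1 (by rwa [mul_one, ← sq])

theorem Complex.enorm_ofReal_toReal {a : ℝ≥0∞} (ha : a ≠ ∞) : ‖(a.toReal : ℂ)‖ₑ = a := by
  rw [← ofReal_norm, Complex.norm_real, Real.norm_of_nonneg ENNReal.toReal_nonneg,
    ENNReal.ofReal_toReal ha]

theorem Complex.conj_mul_div_toReal (z : ℂ) (q : ℝ≥0∞) :
    conj z * (z / q.toReal) = ((‖z‖ₑ ^ 2 / q).toReal : ℂ) := by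
  rw [← mul_div_assoc, Complex.conj_mul', ENNReal.toReal_div, ENNReal.toReal_pow, toReal_enorm]
  push_cast
  rfl

theorem Complex.mul_enorm_div_toReal_sq {q : ℝ≥0∞} (hq₀ : q ≠ 0) (hq : q ≠ ∞) (z : ℂ) :
    q * ‖z / q.toReal‖ₑ ^ 2 = ‖z‖ₑ ^ 2 / q := by
  have hz : ‖z / q.toReal‖ₑ = ‖z‖ₑ / q := by
    rw [← ofReal_norm, norm_div, Complex.norm_real, Real.norm_of_nonneg ENNReal.toReal_nonneg,
      ENNReal.ofReal_div_of_pos (ENNReal.toReal_pos hq₀ hq), ofReal_norm, ENNReal.ofReal_toReal hq]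
  rw [hz, sq, ← mul_assoc, ENNReal.mul_div_cancel' (by simp [hq₀]) (by simp [hq]),
    ← mul_div_assoc, ← sq]

namespace DirectedTree

variable {V : Type} (T : DirectedTree V)

theorem par_eq_of_edge {u v : V} (h : T.edge u v) : T.par v = u := by
  have hv : T.HasParent v := ⟨u, h⟩
  rw [par, dif_pos hv]
  exact T.parent_unique _ _ _ hv.choose_spec h

theorem edge_par {v : V} (h : T.HasParent v) : T.edge (T.par v) v := by
  obtain ⟨u, hu⟩ := h
  rwa [T.par_eq_of_edge hu]

def sigmaChiEquivVcirc : (Σ u : V, T.chi u) ≃ T.Vcirc where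
  toFun p := ⟨p.2, p.1, p.2.2⟩
  invFun v := ⟨T.par v, v, T.edge_par v.2⟩
  left_inv := by
    rintro ⟨u, v, huv⟩
    obtain rfl := T.par_eq_of_edge huv
    rfl
  right_inv _ := rfl

theorem tsum_tsum_chi_eq_tsum_vcirc (g : V → ℝ≥0∞) :
    ∑' u, ∑' v : T.chi u, g v = ∑' v : T.Vcirc, g v := by
  rw [← ENNReal.tsum_sigma, ← T.sigmaChiEquivVcirc.tsum_eq]
  rfl

theorem tsum_tsum_chi_eq_tsum_of_summable {α : Type*} [AddCommGroup α] [UniformSpace α]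
    [IsUniformAddGroup α] [CompleteSpace α] [T0Space α] {g : V → α} (hg : Summable g)
    (hroot : ∀ v, ¬ T.HasParent v → g v = 0) :
    ∑' u, ∑' v : T.chi u, g v = ∑' v, g v := by
  have hsupp : Function.support g ⊆ T.Vcirc := fun v hv => by_contra fun h => hv (hroot v h)
  rw [← tsum_subtype_eq_of_support_subset hsupp, ← T.sigmaChiEquivVcirc.tsum_eq,
    Summable.tsum_sigma]
  · rfl
  · exact T.sigmaChiEquivVcirc.summable_iff.2 (hg.subtype _)

variable (lam : V → ℂ)

theorem Lam_apply_of_mem_chi (f : V → ℂ) {u v : V} (hv : v ∈ T.chi u) :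
    T.Lam lam f v = lam v * f u := by
  rw [Lam, if_pos ⟨u, hv⟩, T.par_eq_of_edge hv]

theorem Lam_apply_of_not_hasParent (f : V → ℂ) {v : V} (hv : ¬ T.HasParent v) :
    T.Lam lam f v = 0 :=
  if_neg hv

theorem zeta_sq (u : V) : T.zeta lam u ^ 2 = ∑' v : T.chi u, ‖lam v‖ₑ ^ 2 := by
  rw [zeta, ← ENNReal.rpow_natCast, ← ENNReal.rpow_mul]
  norm_num
  rfl

theorem tsum_enorm_Lam_sq (f : V → ℂ) :
    ∑' v, ‖T.Lam lam f v‖ₑ ^ 2 = ∑' u, T.zeta lam u ^ 2 * ‖f u‖ₑ ^ 2 := by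
  have hroot : Function.support (fun v => ‖T.Lam lam f v‖ₑ ^ 2) ⊆ T.Vcirc := fun v hv =>
    by_contra fun h => hv (by simp [T.Lam_apply_of_not_hasParent lam f h])
  rw [← tsum_subtype_eq_of_support_subset hroot,
    ← T.tsum_tsum_chi_eq_tsum_vcirc fun v => ‖T.Lam lam f v‖ₑ ^ 2]
  refine tsum_congr fun u => ?_
  rw [zeta_sq, ← ENNReal.tsum_mul_right]
  refine tsum_congr fun v => ?_
  rw [T.Lam_apply_of_mem_chi lam f v.2, enorm_mul, mul_pow]

theorem mem_domain_iff (f : lp (fun _ : V => ℂ) 2) :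
    f ∈ T.domain lam ↔ ∑' u, T.zeta lam u ^ 2 * ‖f u‖ₑ ^ 2 ≠ ∞ := by
  rw [← T.tsum_enorm_Lam_sq]
  exact memℓp_two_iff_tsum_enorm_sq_ne_top

theorem coe_shift {f : lp (fun _ : V => ℂ) 2} (hf : f ∈ T.domain lam) :
    ⇑(T.shift lam f) = T.Lam lam f := by
  rw [shift, dif_pos hf]

theorem enorm_shift_sq {f : lp (fun _ : V => ℂ) 2} (hf : f ∈ T.domain lam) :
    ‖T.shift lam f‖ₑ ^ 2 = ∑' u, T.zeta lam u ^ 2 * ‖f u‖ₑ ^ 2 := by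
  rw [lp.enorm_sq_eq_tsum, T.coe_shift lam hf, T.tsum_enorm_Lam_sq]

theorem zeta_ne_top_of_dense (hdense : Dense (T.domain lam)) (u : V) : T.zeta lam u ≠ ∞ := by
  intro htop
  have hvanish : ∀ f ∈ T.domain lam, f u = 0 := fun f hf => by
    by_contra hfu
    refine (T.mem_domain_iff lam f).1 hf (top_le_iff.1 ?_)
    calc ∞ = T.zeta lam u ^ 2 * ‖f u‖ₑ ^ 2 := by simp [htop, hfu]
      _ ≤ _ := ENNReal.le_tsum u
  have := hdense.eq_zero_of_inner_right ℂ (x := lp.single 2 u (1 : ℂ)) fun f hf => by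
    simp [lp.inner_single_right, hvanish f hf]
  simpa using congrArg (fun f : lp (fun _ : V => ℂ) 2 => f u) this

theorem zeta_ne_zero (hleafless : T.Leafless) (hnz : ∀ v ∈ T.Vcirc, lam v ≠ 0) (u : V) :
    T.zeta lam u ≠ 0 := by
  obtain ⟨v, hv⟩ := hleafless u
  have hpos : 0 < ‖lam v‖ₑ ^ 2 := by simpa [pos_iff_ne_zero] using hnz v ⟨u, hv⟩
  rw [← pow_ne_zero_iff two_ne_zero, zeta_sq]
  exact (hpos.trans_le (ENNReal.le_tsum (⟨v, hv⟩ : T.chi u))).ne'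

def adjLam (f : V → ℂ) (u : V) : ℂ := ∑' v : T.chi u, conj (lam v) * f v

theorem inner_shift_eq_inner_of_coe_eq_adjLam {f g h : lp (fun _ : V => ℂ) 2}
    (hg : g ∈ T.domain lam) (hh : ⇑h = T.adjLam lam f) :
    inner ℂ (T.shift lam g) f = inner ℂ g h := by
  have hroot : ∀ v, ¬ T.HasParent v → inner ℂ (T.shift lam g v) (f v) = 0 := fun v hv => by
    rw [T.coe_shift lam hg, T.Lam_apply_of_not_hasParent lam _ hv, inner_zero_left]
  rw [lp.inner_eq_tsum, lp.inner_eq_tsum,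
    ← T.tsum_tsum_chi_eq_tsum_of_summable (lp.summable_inner (𝕜 := ℂ) (T.shift lam g) f) hroot]
  refine tsum_congr fun u => ?_
  rw [hh, adjLam, RCLike.inner_apply, ← tsum_mul_right]
  refine tsum_congr fun v => ?_
  rw [RCLike.inner_apply, T.coe_shift lam hg, T.Lam_apply_of_mem_chi lam _ v.2, map_mul]
  ring

theorem enorm_adjLam_sq_le (hζ₀ : ∀ v, T.zeta lam v ≠ 0) (hζ : ∀ v, T.zeta lam v ≠ ∞) {u : V}
    (hu : ∑' v : T.chi u, ‖lam v‖ₑ ^ 2 / T.zeta lam v ^ 2 ≤ 1) (f : V → ℂ) :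
    ‖T.adjLam lam f u‖ₑ ^ 2 ≤ ∑' v : T.chi u, T.zeta lam v ^ 2 * ‖f v‖ₑ ^ 2 :=
  calc ‖T.adjLam lam f u‖ₑ ^ 2 ≤ (∑' v : T.chi u, ‖lam v‖ₑ * ‖f v‖ₑ) ^ 2 := by
        gcongr
        refine enorm_tsum_le_tsum_enorm.trans_eq (tsum_congr fun v => ?_)
        rw [enorm_mul, RCLike.enorm_conj]
    _ ≤ (∑' v : T.chi u, ‖lam v‖ₑ ^ 2 / T.zeta lam v ^ 2) *
          ∑' v : T.chi u, T.zeta lam v ^ 2 * ‖f v‖ₑ ^ 2 :=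
        ENNReal.sq_tsum_mul_le_of_weight _ _ _ (fun v => hζ₀ v) (fun v => hζ v)
    _ ≤ ∑' v : T.chi u, T.zeta lam v ^ 2 * ‖f v‖ₑ ^ 2 := by
        simpa using mul_le_mul_left hu _

theorem tsum_enorm_adjLam_sq_le (hζ₀ : ∀ v, T.zeta lam v ≠ 0) (hζ : ∀ v, T.zeta lam v ≠ ∞)
    (hcond : ∀ u, ∑' v : T.chi u, ‖lam v‖ₑ ^ 2 / T.zeta lam v ^ 2 ≤ 1)
    {f : lp (fun _ : V => ℂ) 2} (hf : f ∈ T.domain lam) :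
    ∑' u, ‖T.adjLam lam f u‖ₑ ^ 2 ≤ ‖T.shift lam f‖ₑ ^ 2 :=
  calc ∑' u, ‖T.adjLam lam f u‖ₑ ^ 2
      ≤ ∑' u, ∑' v : T.chi u, T.zeta lam v ^ 2 * ‖f v‖ₑ ^ 2 :=
        ENNReal.tsum_le_tsum fun u => T.enorm_adjLam_sq_le lam hζ₀ hζ (hcond u) f
    _ = ∑' v : T.Vcirc, T.zeta lam v ^ 2 * ‖f v‖ₑ ^ 2 :=
        T.tsum_tsum_chi_eq_tsum_vcirc fun v => T.zeta lam v ^ 2 * ‖f v‖ₑ ^ 2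
    _ ≤ ∑' v, T.zeta lam v ^ 2 * ‖f v‖ₑ ^ 2 :=
        ENNReal.tsum_comp_le_tsum_of_injective Subtype.val_injective _
    _ = ‖T.shift lam f‖ₑ ^ 2 := (T.enorm_shift_sq lam hf).symm

theorem exists_adjoint_of_forall_tsum_le_one (hζ₀ : ∀ v, T.zeta lam v ≠ 0)
    (hζ : ∀ v, T.zeta lam v ≠ ∞)
    (hcond : ∀ u, ∑' v : T.chi u, ‖lam v‖ₑ ^ 2 / T.zeta lam v ^ 2 ≤ 1)
    {f : lp (fun _ : V => ℂ) 2} (hf : f ∈ T.domain lam) :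
    ∃ h : lp (fun _ : V => ℂ) 2,
      (∀ g ∈ T.domain lam, inner ℂ (T.shift lam g) f = inner ℂ g h) ∧ ‖h‖ ≤ ‖T.shift lam f‖ := by
  have hbound := T.tsum_enorm_adjLam_sq_le lam hζ₀ hζ hcond hf
  let h : lp (fun _ : V => ℂ) 2 := ⟨T.adjLam lam f, memℓp_two_iff_tsum_enorm_sq_ne_top.2
    (ne_top_of_le_ne_top (ENNReal.pow_ne_top enorm_ne_top) hbound)⟩
  refine ⟨h, fun g hg => T.inner_shift_eq_inner_of_coe_eq_adjLam lam hg rfl, ?_⟩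
  rw [← enorm_le_iff_norm_le, ← ENNReal.pow_le_pow_left_iff two_ne_zero, lp.enorm_sq_eq_tsum]
  exact hbound

theorem isHyponormal_of_forall_tsum_le_one (hdense : Dense (T.domain lam))
    (hζ₀ : ∀ v, T.zeta lam v ≠ 0)
    (hcond : ∀ u, ∑' v : T.chi u, ‖lam v‖ₑ ^ 2 / T.zeta lam v ^ 2 ≤ 1) :
    T.IsHyponormal lam := by
  have hζ := T.zeta_ne_top_of_dense lam hdense
  refine ⟨hdense, fun f hf => ?_, fun f hf h' hh' => ?_⟩
  · obtain ⟨h, hh, -⟩ := T.exists_adjoint_of_forall_tsum_le_one lam hζ₀ hζ hcond hf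
    exact ⟨h, hh⟩
  · obtain ⟨h, hh, hnorm⟩ := T.exists_adjoint_of_forall_tsum_le_one lam hζ₀ hζ hcond hf
    rwa [← hdense.eq_of_inner_right ℂ fun g hg => (hh g hg).symm.trans (hh' g hg)]

theorem inner_shift_sum_single {g : lp (fun _ : V => ℂ) 2} (hg : g ∈ T.domain lam) {u : V}
    {F : Finset V} (hF : ∀ v ∈ F, v ∈ T.chi u) (c : V → ℂ) :
    inner ℂ (T.shift lam g) (∑ v ∈ F, lp.single 2 v (c v)) =
      inner ℂ g (lp.single 2 u (∑ v ∈ F, conj (lam v) * c v)) := by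
  rw [inner_sum, lp.inner_single_right, RCLike.inner_apply, Finset.sum_mul]
  refine Finset.sum_congr rfl fun v hv => ?_
  rw [lp.inner_single_right, RCLike.inner_apply, T.coe_shift lam hg,
    T.Lam_apply_of_mem_chi lam _ (hF v hv), map_mul]
  ring

theorem sum_single_mem_domain (hζ : ∀ v, T.zeta lam v ≠ ∞) (F : Finset V) (c : V → ℂ) :
    ∑ v ∈ F, lp.single 2 v (c v) ∈ T.domain lam := by
  rw [mem_domain_iff, lp.tsum_mul_enorm_sum_single_sq, ENNReal.sum_ne_top]
  exact fun v _ => ENNReal.mul_ne_top (ENNReal.pow_ne_top (hζ v)) (ENNReal.pow_ne_top enorm_ne_top)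

theorem enorm_shift_sum_single_sq (hζ : ∀ v, T.zeta lam v ≠ ∞) (F : Finset V) (c : V → ℂ) :
    ‖T.shift lam (∑ v ∈ F, lp.single 2 v (c v))‖ₑ ^ 2 = ∑ v ∈ F, T.zeta lam v ^ 2 * ‖c v‖ₑ ^ 2 := by
  rw [T.enorm_shift_sq lam (T.sum_single_mem_domain lam hζ F c), lp.tsum_mul_enorm_sum_single_sq]

theorem enorm_shift_single_sq (hζ : ∀ v, T.zeta lam v ≠ ∞) (u : V) :
    ‖T.shift lam (lp.single 2 u 1)‖ₑ ^ 2 = T.zeta lam u ^ 2 := by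
  simpa using T.enorm_shift_sum_single_sq lam hζ {u} fun _ => 1

variable {T lam}

theorem IsHyponormal.enorm_sum_sq_le (hT : T.IsHyponormal lam) {u : V} {F : Finset V}
    (hF : ∀ v ∈ F, v ∈ T.chi u) (c : V → ℂ) :
    ‖∑ v ∈ F, conj (lam v) * c v‖ₑ ^ 2 ≤ ∑ v ∈ F, T.zeta lam v ^ 2 * ‖c v‖ₑ ^ 2 := by
  have hζ := T.zeta_ne_top_of_dense lam hT.1
  have hnorm := hT.2.2 _ (T.sum_single_mem_domain lam hζ F c) _
    fun g hg => T.inner_shift_sum_single lam hg hF c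
  rw [lp.norm_single (by norm_num), ← enorm_le_iff_norm_le] at hnorm
  rw [← T.enorm_shift_sum_single_sq lam hζ F c]
  gcongr

theorem IsHyponormal.tsum_div_le_one (hT : T.IsHyponormal lam) (hζ₀ : ∀ v, T.zeta lam v ≠ 0)
    (u : V) : ∑' v : T.chi u, ‖lam v‖ₑ ^ 2 / T.zeta lam v ^ 2 ≤ 1 := by
  have hζ := T.zeta_ne_top_of_dense lam hT.1
  have hweight (v : V) := Complex.mul_enorm_div_toReal_sq (pow_ne_zero 2 (hζ₀ v))
    (ENNReal.pow_ne_top (hζ v)) (lam v)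
  have hfin (v : V) : ‖lam v‖ₑ ^ 2 / T.zeta lam v ^ 2 ≠ ∞ :=
    ENNReal.div_ne_top (ENNReal.pow_ne_top enorm_ne_top) (pow_ne_zero 2 (hζ₀ v))
  rw [ENNReal.tsum_eq_iSup_sum]
  refine iSup_le fun s => ?_
  have key := hT.enorm_sum_sq_le (u := u) (F := s.map (Function.Embedding.subtype _))
    (by simp +contextual) fun v => lam v / (T.zeta lam v ^ 2).toReal
  simp only [Finset.sum_map, Function.Embedding.coe_subtype, Complex.conj_mul_div_toReal,
    hweight] at key
  have hsum : ∑ v ∈ s, ‖lam v‖ₑ ^ 2 / T.zeta lam v ^ 2 ≠ ∞ := ENNReal.sum_ne_top.2 fun v _ => hfin v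
  rw [← Complex.ofReal_sum, ← ENNReal.toReal_sum fun (v : T.chi u) _ => hfin v,
    Complex.enorm_ofReal_toReal hsum] at key
  exact ENNReal.le_one_of_sq_le_self hsum key

end DirectedTree

/-- Theorem 4.1: a densely defined weighted shift on a leafless directed tree with
nonzero weights is hyponormal iff `Σ_{v∈Chi(u)} |λ_v|²/‖S_λ e_v‖² ≤ 1` for all `u ∈ V`. -/
theorem stmt13 {V : Type} (T : DirectedTree V) (lam : V → ℂ)
    (hleafless : T.Leafless) (hnz : ∀ v ∈ T.Vcirc, lam v ≠ 0)
    (hdense : Dense (T.domain lam)) :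
    T.IsHyponormal lam ↔
      ∀ u : V, ∑' v : T.chi u, (‖lam (v:V)‖₊ : ℝ≥0∞) ^ 2 /
        (‖T.shift lam (lp.single 2 (v:V) (1:ℂ))‖₊ : ℝ≥0∞) ^ 2 ≤ 1 := by
  have hζ₀ := T.zeta_ne_zero lam hleafless hnz
  simp only [← enorm_eq_nnnorm, T.enorm_shift_single_sq lam (T.zeta_ne_top_of_dense lam hdense)]
  exact ⟨fun hT => hT.tsum_div_le_one hζ₀, T.isHyponormal_of_forall_tsum_le_one lam hdense hζ₀⟩
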